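/- arXiv:2310.18869 — 2 statements merged into one kernel-verified Lean document; each statement's English description precedes it below -/
import Mathlib

section
/- Let p be a prime and r ≥ 1 an integer, and let M(p^r)_{1̂,1̂} be the (p^r−1)×(p^r−1) matrix over ℚ obtained from M(p^r) by deleting the row and column indexed by 0, with remaining rows and columns indexed by i, j ∈ {1, …, p^r−1}. Then M(p^r)_{1̂,1̂} is invertible and, writing ℓ_i = ν_p(i), the (i,j) entry of its inverse equals −p^{1−2r} − ((p−1)/(p+1))·r·p^{1−2r} + p^{1−2r}·(ℓ_i·p − ℓ_i + p)²/((p+1)·(pr+p−r+1)) if i = j, and equals −p^{1−2r}·(ν_p(i−j)·p + p − ν_p(i−j))/(p+1) + p^{1−2r}·(ℓ_i·p + p − ℓ_i)·(ℓ_j·p + p − ℓ_j)/((p+1)·(pr+p−r+1)) if i ≠ j. -/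
/-!
Write `ν(i, j)` for the valuation of `i - j`. Summing row `i` of `M = M(p^r)` over the residue
class of `j` mod `p^t` gives `p^(r-t) p^(2ν(i,j))` when `i` lies outside the class, since there
every entry equals `p^(2ν(i,j))`, and `-p^(r+t-1)` when `i` lies inside it, by downward induction
on `t`: the shell `ν(i, k) = t` has `p^(r-t) - p^(r-t-1)` elements. The matrix `H` with entries
`-p^(1-2r)/(p+1) · ((p-1)ν(i,j) + p + [i = j])` (where `ν(i, i) = r`) combines the all-ones
matrix, the identity and the class indicators `[p^t ∣ k - j]` for `t < r`, so these class sums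
turn `M H = 1` into two geometric sums. Finally, if `M H = 1`, the principal submatrix of `M`
with index `a` deleted has as inverse the Schur complement `H - H_{·a} H_{a·} / H_{aa}`. For
`a = 0` this gives the stated entries.
-/

/-- `M(p^r)`: the `p^r × p^r` matrix over `ℚ` whose `(i,j)` entry is `−p^{2r−1}` if `i = j`
and `p^{2ν_p(i−j)}` otherwise, where `ν_p` is the `p`-adic valuation. -/
def Mpr (p r : ℕ) : Matrix (Fin (p ^ r)) (Fin (p ^ r)) ℚ := fun i j =>
  if i = j then -(p : ℚ) ^ (2 * r - 1)
  else (p : ℚ) ^ (2 * padicValInt p ((i : ℤ) - (j : ℤ)))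

/-- `M(p^r)_{1̂,1̂}`: the matrix obtained from `M(p^r)` by deleting the row and column
indexed by `0`, with remaining rows and columns indexed by `{1, …, p^r−1}`. -/
def MprSub (p r : ℕ) :
    Matrix {i : Fin (p ^ r) // (i : ℕ) ≠ 0} {i : Fin (p ^ r) // (i : ℕ) ≠ 0} ℚ :=
  (Mpr p r).submatrix Subtype.val Subtype.val

open Finset

theorem Matrix.submatrix_mul_schur_eq_one {n K : Type*} [Fintype n] [DecidableEq n] [Field K]
    {A B : Matrix n n K} (hAB : A * B = 1) {a : n} (ha : B a a ≠ 0)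
    {P : n → Prop} [DecidablePred P] (hP : ∀ i, P i ↔ i ≠ a) :
    A.submatrix (Subtype.val : {i // P i} → n) Subtype.val *
      Matrix.of (fun i j : {i // P i} => B i j - B i a * B a j / B a a) = 1 := by
  ext i j
  have hsum : ∀ f : n → K, ∑ k : {k // P k}, f k = ∑ k, f k - f a := fun f => by
    rw [← sum_subtype (univ.erase a) (by simp [hP]), sum_erase_eq_sub (mem_univ a)]
  have hij := congrFun (congrFun hAB i) j
  have hia := congrFun (congrFun hAB i) a
  simp only [Matrix.mul_apply, Matrix.one_apply, if_neg ((hP i).1 i.2)] at hij hia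
  calc ∑ k : {k // P k}, A i k * (B k j - B k a * B a j / B a a)
      = ∑ k : {k // P k}, A i k * B k j - (∑ k : {k // P k}, A i k * B k a) * (B a j / B a a) := by
        simp only [mul_sub, sum_sub_distrib, sum_mul, mul_assoc, mul_div_assoc]
    _ = ((if (i : n) = j then 1 else 0) - A i a * B a j) - (0 - A i a * B a a) * (B a j / B a a) := by
        rw [hsum (fun k => A i k * B k j), hsum (fun k => A i k * B k a), hij, hia]
    _ = (1 : Matrix {i // P i} {i // P i} K) i j := by
        simp only [Matrix.one_apply, Subtype.ext_iff]
        field_simp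
        ring

theorem Fin.eq_of_dvd_sub {n : ℕ} {i j : Fin n} (h : (n : ℤ) ∣ (i : ℤ) - j) : i = j := by
  have hi := i.isLt
  have hj := j.isLt
  have : ((i : ℕ) : ℤ) - (j : ℕ) = 0 := Int.eq_zero_of_abs_lt_dvd h (by rw [abs_lt]; omega)
  exact Fin.ext (by omega)

theorem Fin.card_filter_dvd_sub {n d : ℕ} (hd : d ∣ n) (hd0 : 0 < d) (j : Fin n) :
    #{k : Fin n | (d : ℤ) ∣ (k : ℤ) - j} = n / d := by
  have hcount := Nat.count_modEq_card n hd0 j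
  rw [Nat.mod_eq_zero_of_dvd hd, if_neg (Nat.not_lt_zero _), add_zero,
    Nat.count_eq_card_filter_range, ← Nat.Iio_eq_range, ← Fin.map_valEmbedding_univ, filter_map,
    card_map] at hcount
  rw [← hcount]
  congr! 2 with k
  simp [Nat.modEq_iff_dvd, dvd_sub_comm]

section padicValInt

variable {p : ℕ}

theorem padicValInt_sub_comm (x y : ℤ) : padicValInt p (x - y) = padicValInt p (y - x) := by
  rw [← neg_sub, padicValInt, Int.natAbs_neg, padicValInt]

variable [Fact p.Prime]

theorem padicValInt_add_of_not_pow_dvd {x y : ℤ} {t : ℕ} (hx : ¬ (p : ℤ) ^ t ∣ x)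
    (hy : (p : ℤ) ^ t ∣ y) : padicValInt p (x + y) = padicValInt p x := by
  have hdvd : ∀ s ≤ t, (p : ℤ) ^ s ∣ x + y ↔ (p : ℤ) ^ s ∣ x := fun s hs =>
    dvd_add_left ((pow_dvd_pow _ hs).trans hy)
  have hx0 : x ≠ 0 := by rintro rfl; exact hx (dvd_zero _)
  have hxy0 : x + y ≠ 0 := fun h => hx ((hdvd t le_rfl).1 (h ▸ dvd_zero _))
  have hlt : padicValInt p x < t := by
    by_contra! h
    exact hx ((padicValInt_dvd_iff t x).2 (Or.inr h))
  refine le_antisymm (not_lt.1 fun h => ?_) ?_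
  · have := (hdvd _ hlt).1 ((padicValInt_dvd_iff _ _).2 (Or.inr h))
    have := ((padicValInt_dvd_iff _ _).1 this).resolve_left hx0
    omega
  · exact ((padicValInt_dvd_iff _ _).1 ((hdvd _ hlt.le).2 (padicValInt_dvd x))).resolve_left hxy0

variable {r : ℕ}

theorem Fin.pow_dvd_sub_iff {i j : Fin (p ^ r)} (h : i ≠ j) (t : ℕ) :
    (p : ℤ) ^ t ∣ (i : ℤ) - j ↔ t ≤ padicValInt p ((i : ℤ) - j) := by
  rw [padicValInt_dvd_iff, or_iff_right (sub_ne_zero.2 (by omega))]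

theorem Fin.padicValInt_sub_lt {i j : Fin (p ^ r)} (h : i ≠ j) :
    padicValInt p ((i : ℤ) - j) < r := by
  by_contra! hr
  exact h (Fin.eq_of_dvd_sub (by exact_mod_cast (Fin.pow_dvd_sub_iff h r).2 hr))

end padicValInt

def residueClass (p : ℕ) {r : ℕ} (t : ℕ) (j : Fin (p ^ r)) : Finset (Fin (p ^ r)) :=
  {k | (p : ℤ) ^ t ∣ (k : ℤ) - j}

theorem mem_residueClass {p r t : ℕ} {j k : Fin (p ^ r)} :
    k ∈ residueClass p t j ↔ (p : ℤ) ^ t ∣ (k : ℤ) - j := by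
  simp [residueClass]

theorem card_residueClass {p r t : ℕ} (hp : 0 < p) (ht : t ≤ r) (j : Fin (p ^ r)) :
    #(residueClass p t j) = p ^ (r - t) := by
  rw [← Nat.pow_div ht hp, ← Fin.card_filter_dvd_sub (pow_dvd_pow p ht) (pow_pos hp t)]
  push_cast
  rfl

section Mpr

variable {p r : ℕ}

theorem Mpr_apply_of_ne {i j : Fin (p ^ r)} (h : i ≠ j) :
    Mpr p r i j = (p : ℚ) ^ (2 * padicValInt p ((i : ℤ) - j)) := if_neg h

variable [Fact p.Prime]

theorem sum_residueClass_Mpr_of_not_dvd {t : ℕ} (ht : t ≤ r) {i j : Fin (p ^ r)}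
    (h : ¬ (p : ℤ) ^ t ∣ (i : ℤ) - j) :
    ∑ k ∈ residueClass p t j, Mpr p r i k =
      (p : ℚ) ^ (r - t) * (p : ℚ) ^ (2 * padicValInt p ((i : ℤ) - j)) := by
  have hterm : ∀ k ∈ residueClass p t j,
      Mpr p r i k = (p : ℚ) ^ (2 * padicValInt p ((i : ℤ) - j)) := by
    intro k hk
    rw [mem_residueClass] at hk
    have hik : i ≠ k := by rintro rfl; exact h hk
    rw [Mpr_apply_of_ne hik, ← sub_add_sub_cancel _ (j : ℤ),
      padicValInt_add_of_not_pow_dvd h (dvd_sub_comm.1 hk)]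
  rw [sum_congr rfl hterm, sum_const, card_residueClass (Fact.out : p.Prime).pos ht, nsmul_eq_mul]
  push_cast
  rfl

theorem sum_residueClass_Mpr_self (hr : 0 < r) {t : ℕ} (ht : t ≤ r) (i : Fin (p ^ r)) :
    ∑ k ∈ residueClass p t i, Mpr p r i k = -(p : ℚ) ^ (r + t - 1) := by
  have hp := (Fact.out : p.Prime).pos
  induction ht using Nat.decreasingInduction with
  | self =>
    have hself : residueClass p r i = {i} := by
      ext k
      rw [mem_residueClass, mem_singleton]
      exact ⟨fun h => Fin.eq_of_dvd_sub (by exact_mod_cast h), fun h => h ▸ by simp⟩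
    rw [hself, sum_singleton, Mpr, if_pos rfl, show r + r - 1 = 2 * r - 1 by omega]
  | of_succ t ht ih =>
    have hsub : residueClass p (t + 1) i ⊆ residueClass p t i := fun k hk => by
      rw [mem_residueClass] at hk ⊢
      exact (pow_dvd_pow _ t.le_succ).trans hk
    have hshell : ∀ k ∈ residueClass p t i \ residueClass p (t + 1) i,
        Mpr p r i k = (p : ℚ) ^ (2 * t) := by
      intro k hk
      rw [mem_sdiff, mem_residueClass, mem_residueClass] at hk
      have hki : k ≠ i := by rintro rfl; simp at hk
      rw [Fin.pow_dvd_sub_iff hki, Fin.pow_dvd_sub_iff hki] at hk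
      rw [Mpr_apply_of_ne hki.symm, padicValInt_sub_comm, show padicValInt p _ = t by omega]
    obtain ⟨m, rfl⟩ : ∃ m, r = t + m + 1 := ⟨r - t - 1, by omega⟩
    rw [← sum_sdiff hsub, ih, sum_congr rfl hshell, sum_const, card_sdiff_of_subset hsub,
      card_residueClass hp ht.le, card_residueClass hp ht, nsmul_eq_mul,
      Nat.cast_sub (Nat.pow_le_pow_right hp (by omega))]
    rw [show t + m + 1 - t = m + 1 by omega, show t + m + 1 - (t + 1) = m by omega,
      show t + m + 1 + t - 1 = 2 * t + m by omega,
      show t + m + 1 + (t + 1) - 1 = 2 * t + m + 1 by omega]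
    push_cast
    ring

theorem sum_residueClass_Mpr (hr : 0 < r) {t : ℕ} (ht : t ≤ r) (i j : Fin (p ^ r)) :
    ∑ k ∈ residueClass p t j, Mpr p r i k =
      if (p : ℤ) ^ t ∣ (i : ℤ) - j then -(p : ℚ) ^ (r + t - 1)
      else (p : ℚ) ^ (r - t) * (p : ℚ) ^ (2 * padicValInt p ((i : ℤ) - j)) := by
  split_ifs with h
  · have hclass : residueClass p t j = residueClass p t i := by
      ext k
      rw [mem_residueClass, mem_residueClass, ← sub_add_sub_cancel (k : ℤ) i j]
      exact dvd_add_left h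
    rw [hclass, sum_residueClass_Mpr_self hr ht]
  · exact sum_residueClass_Mpr_of_not_dvd ht h

theorem sum_range_ite_pow_dvd_sub (i j : Fin (p ^ r)) :
    ∑ t ∈ range r, (if (p : ℤ) ^ t ∣ (i : ℤ) - j then (1 : ℚ) else 0) =
      if i = j then (r : ℚ) else padicValInt p ((i : ℤ) - j) + 1 := by
  split_ifs with h
  · simp [h]
  · have hlt := Fin.padicValInt_sub_lt h
    simp_rw [Fin.pow_dvd_sub_iff h, sum_boole]
    rw [show ({t ∈ range r | t ≤ padicValInt p ((i : ℤ) - j)}) =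
        range (padicValInt p ((i : ℤ) - j) + 1) by ext; simp; omega]
    simp

end Mpr

noncomputable def MprInv (p r : ℕ) : Matrix (Fin (p ^ r)) (Fin (p ^ r)) ℚ := fun i j =>
  -(p : ℚ) ^ (1 - 2 * (r : ℤ)) / (p + 1) *
    if i = j then (r : ℚ) * (p - 1) + p + 1 else (padicValInt p ((i : ℤ) - j) : ℚ) * (p - 1) + p

section MprInv

variable {p r : ℕ} [Fact p.Prime]

theorem MprInv_apply_eq_sum_ite (i j : Fin (p ^ r)) :
    MprInv p r i j = -(p : ℚ) ^ (1 - 2 * (r : ℤ)) / (p + 1) *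
      (1 + (p - 1) * ∑ t ∈ range r, (if (p : ℤ) ^ t ∣ (i : ℤ) - j then 1 else 0) +
        p * if i = j then 1 else 0) := by
  rw [sum_range_ite_pow_dvd_sub, MprInv]
  split_ifs <;> ring

theorem natCast_mul_sub_one_add_add_one_ne_zero (r : ℕ) : (r : ℚ) * (p - 1) + p + 1 ≠ 0 := by
  have hp : (1 : ℚ) ≤ p := by exact_mod_cast (Fact.out : p.Prime).one_lt.le
  nlinarith

theorem MprInv_apply_self_ne_zero (i : Fin (p ^ r)) : MprInv p r i i ≠ 0 := by
  rw [MprInv, if_pos rfl]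
  have hp : (p : ℚ) ≠ 0 := Nat.cast_ne_zero.2 (Fact.out : p.Prime).ne_zero
  exact mul_ne_zero (div_ne_zero (neg_ne_zero.2 (zpow_ne_zero _ hp)) (by positivity))
    (natCast_mul_sub_one_add_add_one_ne_zero r)

theorem Mpr_mul_MprInv_apply_eq_sum_residueClass (i j : Fin (p ^ r)) :
    (Mpr p r * MprInv p r) i j = -(p : ℚ) ^ (1 - 2 * (r : ℤ)) / (p + 1) *
      (∑ k ∈ residueClass p 0 j, Mpr p r i k +
        (p - 1) * ∑ t ∈ range r, ∑ k ∈ residueClass p t j, Mpr p r i k + p * Mpr p r i j) := by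
  simp only [residueClass, sum_filter, pow_zero, one_dvd, if_true]
  rw [Matrix.mul_apply]
  simp only [MprInv_apply_eq_sum_ite, mul_add, mul_sum, sum_add_distrib, mul_ite, mul_one, mul_zero]
  rw [sum_ite_eq' univ j, if_pos (mem_univ _), sum_comm]
  congr 1
  · congr 1
    · exact sum_congr rfl fun _ _ => by ring
    · exact sum_congr rfl fun _ _ => sum_congr rfl fun _ _ => by split_ifs <;> ring
  · ring

theorem Mpr_mul_MprInv_apply_self (hr : 0 < r) (i : Fin (p ^ r)) : (Mpr p r * MprInv p r) i i = 1 := by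
  have hp : (p : ℚ) ≠ 0 := Nat.cast_ne_zero.2 (Fact.out : p.Prime).ne_zero
  have hsum : ∑ t ∈ range r, ∑ k ∈ residueClass p t i, Mpr p r i k =
      (p : ℚ) ^ (r - 1) * ∑ t ∈ range r, -(p : ℚ) ^ t := by
    rw [mul_sum]
    refine sum_congr rfl fun t ht => ?_
    rw [sum_residueClass_Mpr hr (mem_range.1 ht).le, if_pos (by simp), mul_neg, ← pow_add,
      show r + t - 1 = r - 1 + t by omega]
  have hpow : (p : ℚ) ^ (r - 1) * (p : ℚ) ^ r = (p : ℚ) ^ (2 * r - 1) := by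
    rw [← pow_add]
    congr 1
    omega
  have hzpow : (p : ℚ) ^ (1 - 2 * (r : ℤ)) * (p : ℚ) ^ (2 * r - 1) = 1 := by
    rw [← zpow_natCast, ← zpow_add₀ hp, Nat.cast_sub (by omega)]
    simp
  rw [Mpr_mul_MprInv_apply_eq_sum_residueClass, sum_residueClass_Mpr hr (Nat.zero_le r),
    if_pos (by simp), hsum, Mpr, if_pos rfl, sum_neg_distrib, Nat.add_zero, div_mul_eq_mul_div,
    div_eq_one_iff_eq (by positivity)]
  linear_combination (p : ℚ) ^ (1 - 2 * (r : ℤ)) * (p : ℚ) ^ (r - 1) * geom_sum_mul (p : ℚ) r +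
    (p : ℚ) ^ (1 - 2 * (r : ℤ)) * hpow + (1 + (p : ℚ)) * hzpow

theorem Mpr_mul_MprInv_apply_of_ne (hr : 0 < r) {i j : Fin (p ^ r)} (h : i ≠ j) :
    (Mpr p r * MprInv p r) i j = 0 := by
  obtain ⟨c, hc⟩ : ∃ c, padicValInt p ((i : ℤ) - j) = c := ⟨_, rfl⟩
  obtain ⟨m, hm⟩ : ∃ m, r = c + m + 1 := ⟨r - c - 1, by have := Fin.padicValInt_sub_lt h; omega⟩
  have hlow : ∑ t ∈ range (c + 1), ∑ k ∈ residueClass p t j, Mpr p r i k =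
      -(p : ℚ) ^ (c + m) * ∑ t ∈ range (c + 1), (p : ℚ) ^ t := by
    rw [mul_sum]
    refine sum_congr rfl fun t ht => ?_
    rw [mem_range] at ht
    rw [sum_residueClass_Mpr hr (by omega), if_pos ((Fin.pow_dvd_sub_iff h t).2 (by omega)),
      neg_mul, ← pow_add, show r + t - 1 = c + m + t by omega]
  have hhigh : ∑ t ∈ Ico (c + 1) r, ∑ k ∈ residueClass p t j, Mpr p r i k =
      (p : ℚ) ^ (2 * c) * ∑ u ∈ Ico 1 (m + 1), (p : ℚ) ^ u := by
    have hterm : ∀ t ∈ Ico (c + 1) r, ∑ k ∈ residueClass p t j, Mpr p r i k =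
        (p : ℚ) ^ (2 * c) * (p : ℚ) ^ (r - t) := fun t ht => by
      rw [mem_Ico] at ht
      rw [sum_residueClass_Mpr hr (by omega), if_neg (mt (Fin.pow_dvd_sub_iff h t).1 (by omega)),
        mul_comm, hc]
    rw [sum_congr rfl hterm, sum_Ico_reflect (fun u => (p : ℚ) ^ (2 * c) * (p : ℚ) ^ u) _
      (Nat.le_succ r), mul_sum, show r + 1 - r = 1 by omega, show r + 1 - (c + 1) = m + 1 by omega]
  rw [Mpr_mul_MprInv_apply_eq_sum_residueClass, sum_residueClass_Mpr hr (Nat.zero_le r),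
    if_pos (by simp), ← sum_range_add_sum_Ico _ (show c + 1 ≤ r by omega), hlow, hhigh,
    Mpr_apply_of_ne h, hc, show r + 0 - 1 = c + m by omega]
  linear_combination (-(p : ℚ) ^ (1 - 2 * (r : ℤ)) / (p + 1)) *
    (-(p : ℚ) ^ (c + m) * geom_sum_mul (p : ℚ) (c + 1) +
      (p : ℚ) ^ (2 * c) * geom_sum_Ico_mul (p : ℚ) (by omega : 1 ≤ m + 1))

theorem Mpr_mul_MprInv (hr : 0 < r) : Mpr p r * MprInv p r = 1 := by
  ext i j
  rw [Matrix.one_apply]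
  split_ifs with h
  · exact h ▸ Mpr_mul_MprInv_apply_self hr i
  · exact Mpr_mul_MprInv_apply_of_ne hr h

end MprInv

/-- For a prime `p` and `r ≥ 1`, `M(p^r)_{1̂,1̂}` is invertible and, writing
`ℓ_i = ν_p(i)`, the `(i,j)` entry of its inverse equals
`−p^{1−2r} − ((p−1)/(p+1))·r·p^{1−2r} + p^{1−2r}·(ℓ_i·p − ℓ_i + p)²/((p+1)·(pr+p−r+1))`
if `i = j`, and
`−p^{1−2r}·(ν_p(i−j)·p + p − ν_p(i−j))/(p+1)
  + p^{1−2r}·(ℓ_i·p + p − ℓ_i)·(ℓ_j·p + p − ℓ_j)/((p+1)·(pr+p−r+1))` otherwise. -/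
theorem stmt12 (p r : ℕ) (hp : p.Prime) (hr : 1 ≤ r) :
    IsUnit (MprSub p r) ∧
    ∀ i j : {i : Fin (p ^ r) // (i : ℕ) ≠ 0}, (MprSub p r)⁻¹ i j =
      if i = j then
        -(p : ℚ) ^ (1 - 2 * (r : ℤ)) -
          (((p : ℚ) - 1) / ((p : ℚ) + 1)) * (r : ℚ) * (p : ℚ) ^ (1 - 2 * (r : ℤ)) +
          (p : ℚ) ^ (1 - 2 * (r : ℤ)) *
            ((padicValNat p (i.1 : ℕ) : ℚ) * p - (padicValNat p (i.1 : ℕ) : ℚ) + p) ^ 2 /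
            (((p : ℚ) + 1) * ((p : ℚ) * r + p - r + 1))
      else
        -(p : ℚ) ^ (1 - 2 * (r : ℤ)) *
            ((padicValInt p ((i.1 : ℤ) - (j.1 : ℤ)) : ℚ) * p + p -
              (padicValInt p ((i.1 : ℤ) - (j.1 : ℤ)) : ℚ)) / ((p : ℚ) + 1) +
          (p : ℚ) ^ (1 - 2 * (r : ℤ)) *
            ((padicValNat p (i.1 : ℕ) : ℚ) * p + p - (padicValNat p (i.1 : ℕ) : ℚ)) *
            ((padicValNat p (j.1 : ℕ) : ℚ) * p + p - (padicValNat p (j.1 : ℕ) : ℚ)) /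
            (((p : ℚ) + 1) * ((p : ℚ) * r + p - r + 1)) := by
  have := Fact.mk hp
  obtain ⟨a, ha0⟩ : ∃ a : Fin (p ^ r), (a : ℕ) = 0 := ⟨⟨0, pow_pos hp.pos r⟩, rfl⟩
  have hN : MprSub p r * _ = 1 := Matrix.submatrix_mul_schur_eq_one (Mpr_mul_MprInv hr)
    (MprInv_apply_self_ne_zero a) (P := fun i => (i : ℕ) ≠ 0) fun i => by rw [← ha0, Ne, Fin.val_inj]
  refine ⟨(Matrix.isUnit_iff_isUnit_det _).2 (Matrix.isUnit_det_of_right_inverse hN), fun i j => ?_⟩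
  have hval : ∀ k : Fin (p ^ r), padicValInt p ((k : ℤ) - (a : ℕ)) = padicValNat p k := by
    simp [ha0, padicValInt.of_nat]
  have hval' : ∀ k : Fin (p ^ r), padicValInt p (((a : ℕ) : ℤ) - k) = padicValNat p k :=
    fun k => by rw [padicValInt_sub_comm, hval]
  have hi : (i : Fin (p ^ r)) ≠ a := fun h => i.2 (by rw [h, ha0])
  have hj : (j : Fin (p ^ r)) ≠ a := fun h => j.2 (by rw [h, ha0])
  have hden := natCast_mul_sub_one_add_add_one_ne_zero (p := p) r
  rw [Matrix.inv_eq_right_inv hN, Matrix.of_apply]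
  simp only [MprInv, if_neg hi, if_neg hj.symm, hval, hval', ← Subtype.ext_iff,
    show (p : ℚ) * r + p - r + 1 = r * (p - 1) + p + 1 by ring]
  split_ifs with h
  · subst h
    field_simp
    ring
  · field_simp
    ring
end

section
/- Let p be a prime and r ≥ 1 an integer. Then T₀ is invertible over ℚ and every entry of T₀⁻¹ is negative. -/
/-- `B`: the `p^{r−1} × p^{r−1}` matrix whose diagonal entries equal `−p^{2r−1}` and whose
off-diagonal `(i,j)` entries equal `p^{2ν_p(i−j)+2}`. -/
def Bmat (p r : ℕ) : Matrix (Fin (p ^ (r - 1))) (Fin (p ^ (r - 1))) ℚ := fun i j =>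
  if i = j then -(p : ℚ) ^ (2 * r - 1)
  else (p : ℚ) ^ (2 * padicValInt p ((i : ℤ) - (j : ℤ)) + 2)

/-- `T₀`: the block matrix `[[M(p^r)_{1̂,1̂}, 𝟏], [𝟏, B]]`, where `𝟏` denotes all-ones
blocks of the appropriate sizes. -/
def T0 (p r : ℕ) :
    Matrix ({i : Fin (p ^ r) // (i : ℕ) ≠ 0} ⊕ Fin (p ^ (r - 1)))
      ({i : Fin (p ^ r) // (i : ℕ) ≠ 0} ⊕ Fin (p ^ (r - 1))) ℚ :=
  Matrix.fromBlocks (MprSub p r) (Matrix.of fun _ _ => 1) (Matrix.of fun _ _ => 1) (Bmat p r)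

/-! The matrix `T₀` has positive off-diagonal entries and negative row sums: a row through
`M(p^r)_{1̂,1̂}` sums to `−p^{2ν_p(i)}` and a row through `B` to `−1`, because exactly `p^{m−k}`
of the `j ∈ [0, p^m)` satisfy `p^k ∣ i − j`. For such a matrix `A`, looking at a largest entry of
`x` shows that `A x ≥ 0` forces `x ≤ 0`. This makes `A` invertible, and applied to the columns of
`A⁻¹` (where `A x = e_j`) it makes every entry of `A⁻¹` negative. -/

open Finset

namespace Matrix

variable {𝕜 ι : Type*} [Field 𝕜] [LinearOrder 𝕜] [IsStrictOrderedRing 𝕜] [Fintype ι]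
  {A : Matrix ι ι 𝕜}

theorem nonpos_of_nonneg_mulVec (hoff : ∀ i j, i ≠ j → 0 ≤ A i j) (hrow : ∀ i, ∑ j, A i j < 0)
    {x : ι → 𝕜} (hx : 0 ≤ A *ᵥ x) : x ≤ 0 := by
  intro i
  obtain ⟨k, -, hk⟩ := exists_max_image univ x ⟨i, mem_univ i⟩
  have hAx : (A *ᵥ x) k ≤ (∑ j, A k j) * x k := by
    rw [mulVec, dotProduct, sum_mul]
    refine sum_le_sum fun j _ => ?_
    rcases eq_or_ne k j with rfl | hkj
    · rfl
    · exact mul_le_mul_of_nonneg_left (hk j (mem_univ j)) (hoff k j hkj)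
  exact (hk i (mem_univ i)).trans (nonpos_of_mul_nonneg_right ((hx k).trans hAx) (hrow k))

variable [DecidableEq ι]

theorem isUnit_of_nonneg_offDiag_of_sum_row_neg (hoff : ∀ i j, i ≠ j → 0 ≤ A i j)
    (hrow : ∀ i, ∑ j, A i j < 0) : IsUnit A := by
  rw [isUnit_iff_isUnit_det, isUnit_iff_ne_zero]
  intro hdet
  obtain ⟨v, hv, hAv⟩ := exists_mulVec_eq_zero_iff.2 hdet
  have hle : v ≤ 0 := nonpos_of_nonneg_mulVec hoff hrow hAv.ge
  have hge : -v ≤ 0 := nonpos_of_nonneg_mulVec hoff hrow (by rw [mulVec_neg, hAv, neg_zero])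
  exact hv (le_antisymm hle (neg_nonpos.1 hge))

theorem inv_apply_neg_of_pos_offDiag_of_sum_row_neg (hoff : ∀ i j, i ≠ j → 0 < A i j)
    (hrow : ∀ i, ∑ j, A i j < 0) (i j : ι) : A⁻¹ i j < 0 := by
  have hoff' : ∀ i j, i ≠ j → 0 ≤ A i j := fun i j h => (hoff i j h).le
  set x : ι → 𝕜 := fun l => A⁻¹ l j
  have hAx : ∀ k, (A *ᵥ x) k = (1 : Matrix ι ι 𝕜) k j := fun k => by
    rw [← mul_nonsing_inv A ((isUnit_iff_isUnit_det A).1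
      (isUnit_of_nonneg_offDiag_of_sum_row_neg hoff' hrow))]
    rfl
  have hx : x ≤ 0 := nonpos_of_nonneg_mulVec hoff' hrow fun k => by
    rw [hAx, one_apply]; split_ifs <;> simp
  have hdiag_neg : ∀ k, A k k < 0 := fun k => by
    have hk := hrow k
    rw [← add_sum_erase _ _ (mem_univ k)] at hk
    have hrest : 0 ≤ ∑ l ∈ univ.erase k, A k l :=
      sum_nonneg fun l hl => hoff' k l (ne_of_mem_erase hl).symm
    linarith
  have hsplit : ∀ k, A k k * x k = (1 : Matrix ι ι 𝕜) k j - ∑ l ∈ univ.erase k, A k l * x l :=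
    fun k => by rw [← hAx, mulVec, dotProduct, ← add_sum_erase _ _ (mem_univ k)]; ring
  have hterm : ∀ k l, l ≠ k → A k l * x l ≤ 0 := fun k l h =>
    mul_nonpos_of_nonneg_of_nonpos (hoff' k l h.symm) (hx l)
  have hj : x j < 0 := by
    refine neg_of_mul_pos_right ?_ (hdiag_neg j).le
    rw [hsplit, one_apply_eq]
    have hrest := sum_nonpos fun l (hl : l ∈ univ.erase j) => hterm j l (ne_of_mem_erase hl)
    linarith
  rcases eq_or_ne i j with rfl | hij
  · exact hj
  refine neg_of_mul_pos_right ?_ (hdiag_neg i).le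
  rw [hsplit, one_apply_ne hij]
  have hsum : ∑ l ∈ univ.erase i, A i l * x l ≤ A i j * x j := by
    simpa using sum_le_sum_of_subset_of_nonpos' (singleton_subset_iff.2 (mem_erase.2
      ⟨hij.symm, mem_univ j⟩)) fun l hl _ => hterm i l (ne_of_mem_erase hl)
  have hij_term := mul_neg_of_pos_of_neg (hoff i j hij) hj
  linarith

end Matrix

theorem card_filter_fin_dvd_sub {n q : ℕ} (hq : 0 < q) (hqn : q ∣ n) (x : ℕ) :
    #{y : Fin n | (q : ℤ) ∣ x - y} = n / q := by
  have hcount : #{y : Fin n | (q : ℤ) ∣ x - y} = Nat.count (· ≡ x [MOD q]) n := by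
    simp only [Nat.count_eq_card_filter_range, card_filter, Nat.modEq_iff_dvd]
    exact Fin.sum_univ_eq_sum_range (fun y => if (q : ℤ) ∣ x - y then 1 else 0) n
  rw [hcount, Nat.count_modEq_card _ hq, Nat.mod_eq_zero_of_dvd hqn]
  simp

theorem padicValInt_lt_of_natAbs_lt {p m : ℕ} (hp : 1 < p) {d : ℤ} (hd : d ≠ 0)
    (hlt : d.natAbs < p ^ m) : padicValInt p d < m := by
  have hle : p ^ padicValInt p d ≤ d.natAbs :=
    Nat.le_of_dvd (Int.natAbs_pos.2 hd) (Int.natCast_dvd.1 (by exact_mod_cast padicValInt_dvd d))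
  exact (Nat.pow_lt_pow_iff_right hp).1 (hle.trans_lt hlt)

theorem apply_padicValInt_eq_add_sum {G : Type*} [AddCommGroup G] {p m : ℕ} [Fact p.Prime]
    {d : ℤ} (hd : d ≠ 0) (hlt : d.natAbs < p ^ m) (f : ℕ → G) :
    f (padicValInt p d) =
      f 0 + ∑ k ∈ range m, if (p : ℤ) ^ (k + 1) ∣ d then f (k + 1) - f k else 0 := by
  have hν := padicValInt_lt_of_natAbs_lt (Fact.out : p.Prime).one_lt hd hlt
  have hfilter : {k ∈ range m | (p : ℤ) ^ (k + 1) ∣ d} = range (padicValInt p d) := by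
    ext k
    simp only [mem_filter, mem_range, padicValInt_dvd_iff, hd, false_or]
    omega
  rw [← sum_filter, hfilter, sum_range_sub, add_sub_cancel]

theorem mul_add_sum_pow_sub_eq {R : Type*} [CommRing R] (a : R) (m : ℕ) :
    a * (a ^ m - 1 +
      ∑ k ∈ range m, (a ^ (2 * (k + 1)) - a ^ (2 * k)) * (a ^ (m - (k + 1)) - 1)) =
      a ^ (2 * m) - a ^ m := by
  have hweights : ∑ k ∈ range m, (a ^ (2 * (k + 1)) - a ^ (2 * k)) = a ^ (2 * m) - 1 := by
    simpa using sum_range_sub (fun k => a ^ (2 * k)) m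
  have hmoments : ∑ k ∈ range m, a * (a ^ (2 * (k + 1)) - a ^ (2 * k)) * a ^ (m - (k + 1)) =
      (a + 1) * (a ^ (2 * m) - a ^ m) := by
    have := sum_range_sub (fun k => a ^ (m + k)) m
    rw [← two_mul, add_zero] at this
    rw [← this, mul_sum]
    refine sum_congr rfl fun k hk => ?_
    have hk : a ^ (m + k) = a ^ (m - (k + 1)) * a ^ (2 * k + 1) := by
      rw [← pow_add]; congr 1; have := mem_range.1 hk; omega
    rw [← add_assoc, pow_succ, hk]
    ring
  calc _ = a * (a ^ m - 1)
        + ∑ k ∈ range m, a * (a ^ (2 * (k + 1)) - a ^ (2 * k)) * a ^ (m - (k + 1))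
        - a * ∑ k ∈ range m, (a ^ (2 * (k + 1)) - a ^ (2 * k)) := by
        rw [mul_add, mul_sum, mul_sum, add_sub_assoc, ← sum_sub_distrib]
        exact congrArg _ (sum_congr rfl fun k _ => by ring)
    _ = _ := by rw [hmoments, hweights]; ring

theorem mul_sum_pow_padicValInt_sub {p : ℕ} [hp : Fact p.Prime] (m : ℕ) (x : Fin (p ^ m)) :
    (p : ℚ) * ∑ y ∈ univ.erase x, (p : ℚ) ^ (2 * padicValInt p ((x : ℤ) - y)) =
      p ^ (2 * m) - p ^ m := by
  have hexpand : ∀ y ∈ univ.erase x, (p : ℚ) ^ (2 * padicValInt p ((x : ℤ) - y)) =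
      1 + ∑ k ∈ range m, if (p : ℤ) ^ (k + 1) ∣ (x : ℤ) - y
        then (p : ℚ) ^ (2 * (k + 1)) - p ^ (2 * k) else 0 := fun y hy => by
    have hxy : (x : ℤ) - y ≠ 0 := sub_ne_zero.2 fun h => ne_of_mem_erase hy (Fin.ext (by omega))
    simpa using apply_padicValInt_eq_add_sum hxy (by omega) fun k => (p : ℚ) ^ (2 * k)
  have hinner : ∀ k ∈ range m, (∑ y ∈ univ.erase x, if (p : ℤ) ^ (k + 1) ∣ (x : ℤ) - y
      then (p : ℚ) ^ (2 * (k + 1)) - p ^ (2 * k) else 0) =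
      ((p : ℚ) ^ (2 * (k + 1)) - p ^ (2 * k)) * (p ^ (m - (k + 1)) - 1) := fun k hk => by
    have hkm : k + 1 ≤ m := mem_range.1 hk
    have hcard := card_filter_fin_dvd_sub (pow_pos hp.out.pos (k + 1)) (pow_dvd_pow p hkm) x
    push_cast at hcard
    rw [← sum_filter, sum_const, nsmul_eq_mul, mul_comm, filter_erase,
      card_erase_of_mem (by simp), hcard, Nat.pow_div hkm hp.out.pos,
      Nat.cast_pred (pow_pos hp.out.pos _), Nat.cast_pow]
  rw [sum_congr rfl hexpand, sum_add_distrib, sum_comm, sum_congr rfl hinner, sum_const,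
    card_erase_of_mem (mem_univ x), card_univ, Fintype.card_fin, nsmul_one,
    Nat.cast_pred (pow_pos hp.out.pos _), Nat.cast_pow]
  exact mul_add_sum_pow_sub_eq (p : ℚ) m

theorem sum_subtype_val_ne_zero {M : Type*} [AddCommGroup M] {n : ℕ} (hn : 0 < n)
    (f : Fin n → M) : ∑ i : {i : Fin n // (i : ℕ) ≠ 0}, f i = ∑ i, f i - f ⟨0, hn⟩ := by
  rw [← sum_erase_eq_sub (mem_univ _)]
  exact (sum_subtype (p := fun i : Fin n => (i : ℕ) ≠ 0) _ (fun i => by simp [Fin.ext_iff]) f).symm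

section T0

variable {p r : ℕ}

theorem sum_Mpr_row [hp : Fact p.Prime] (hr : 1 ≤ r) (i : Fin (p ^ r)) :
    ∑ j, Mpr p r i j = -(p : ℚ) ^ (r - 1) := by
  have hS := mul_sum_pow_padicValInt_sub r i
  have hoff : ∀ j ∈ univ.erase i, Mpr p r i j = (p : ℚ) ^ (2 * padicValInt p ((i : ℤ) - j)) :=
    fun j hj => if_neg (ne_of_mem_erase hj).symm
  rw [← add_sum_erase _ _ (mem_univ i), sum_congr rfl hoff, Mpr, if_pos rfl]
  refine mul_left_cancel₀ (Nat.cast_ne_zero.2 hp.out.ne_zero : (p : ℚ) ≠ 0) ?_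
  have h2r : (p : ℚ) ^ (2 * r) = p * p ^ (2 * r - 1) := by rw [← pow_succ']; congr 1; omega
  have hr : (p : ℚ) ^ r = p * p ^ (r - 1) := by rw [← pow_succ']; congr 1; omega
  linear_combination hS + h2r - hr

theorem sum_Bmat_row [Fact p.Prime] (hr : 1 ≤ r) (i : Fin (p ^ (r - 1))) :
    ∑ j, Bmat p r i j = -(p : ℚ) ^ r := by
  have hS := mul_sum_pow_padicValInt_sub (r - 1) i
  have hoff : ∀ j ∈ univ.erase i, Bmat p r i j =
      (p : ℚ) ^ 2 * (p : ℚ) ^ (2 * padicValInt p ((i : ℤ) - j)) :=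
    fun j hj => by rw [Bmat, if_neg (ne_of_mem_erase hj).symm, pow_add, mul_comm]
  rw [← add_sum_erase _ _ (mem_univ i), sum_congr rfl hoff, ← mul_sum, Bmat, if_pos rfl]
  have h2r : (p : ℚ) ^ (2 * r - 1) = p * p ^ (2 * (r - 1)) := by rw [← pow_succ']; congr 1; omega
  have hr : (p : ℚ) ^ r = p * p ^ (r - 1) := by rw [← pow_succ']; congr 1; omega
  linear_combination p * hS - h2r + hr

theorem T0_pos_of_ne (hp : 0 < p) {i j} (hij : i ≠ j) : 0 < T0 p r i j := by
  have hp' : (0 : ℚ) < p := Nat.cast_pos.2 hp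
  rcases i with x | x <;> rcases j with y | y
  · have hxy : x.1 ≠ y.1 := fun h => hij (congrArg Sum.inl (Subtype.ext h))
    simpa [T0, MprSub, Mpr, hxy] using pow_pos hp' _
  · exact one_pos
  · exact one_pos
  · have hxy : x ≠ y := fun h => hij (congrArg Sum.inr h)
    simpa [T0, Bmat, hxy] using pow_pos hp' _

theorem sum_T0_inl [hp : Fact p.Prime] (hr : 1 ≤ r) (x : {i : Fin (p ^ r) // (i : ℕ) ≠ 0}) :
    ∑ j, T0 p r (Sum.inl x) j = -(p : ℚ) ^ (2 * padicValInt p (x : ℕ)) := by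
  have hpr : 0 < p ^ r := pow_pos hp.out.pos r
  have hx0 : Mpr p r x ⟨0, hpr⟩ = (p : ℚ) ^ (2 * padicValInt p (x : ℕ)) := by
    rw [Mpr, if_neg fun h => x.2 (congrArg Fin.val h)]
    simp
  simp only [T0, Fintype.sum_sum_type, Matrix.fromBlocks_apply₁₁, Matrix.fromBlocks_apply₁₂,
    MprSub, Matrix.submatrix_apply, Matrix.of_apply, sum_const, card_univ, Fintype.card_fin,
    nsmul_one]
  rw [sum_subtype_val_ne_zero hpr (Mpr p r x), sum_Mpr_row hr, hx0]
  push_cast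
  ring

theorem sum_T0_inr [hp : Fact p.Prime] (hr : 1 ≤ r) (x : Fin (p ^ (r - 1))) :
    ∑ j, T0 p r (Sum.inr x) j = -1 := by
  simp only [T0, Fintype.sum_sum_type, Matrix.fromBlocks_apply₂₁, Matrix.fromBlocks_apply₂₂,
    Matrix.of_apply]
  rw [sum_subtype_val_ne_zero (pow_pos hp.out.pos r) fun _ => (1 : ℚ), sum_Bmat_row hr]
  simp only [sum_const, card_univ, Fintype.card_fin, nsmul_one]
  push_cast
  ring

theorem sum_T0_row_neg [hp : Fact p.Prime] (hr : 1 ≤ r) (i) : ∑ j, T0 p r i j < 0 := by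
  rcases i with x | x
  · rw [sum_T0_inl hr x]
    exact neg_neg_of_pos (pow_pos (Nat.cast_pos.2 hp.out.pos) _)
  · rw [sum_T0_inr hr x]
    exact neg_one_lt_zero

end T0

/-- For a prime `p` and integer `r ≥ 1`, `T₀` is invertible over `ℚ` and
every entry of `T₀⁻¹` is negative. -/
theorem stmt16 (p r : ℕ) (hp : p.Prime) (hr : 1 ≤ r) :
    IsUnit (T0 p r) ∧
    ∀ i j : {i : Fin (p ^ r) // (i : ℕ) ≠ 0} ⊕ Fin (p ^ (r - 1)),
      (T0 p r)⁻¹ i j < 0 := by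
  have : Fact p.Prime := ⟨hp⟩
  have hoff : ∀ i j, i ≠ j → 0 < T0 p r i j := fun _ _ => T0_pos_of_ne hp.pos
  have hrow : ∀ i, ∑ j, T0 p r i j < 0 := sum_T0_row_neg hr
  exact ⟨Matrix.isUnit_of_nonneg_offDiag_of_sum_row_neg (fun i j h => (hoff i j h).le) hrow,
    Matrix.inv_apply_neg_of_pos_offDiag_of_sum_row_neg hoff hrow⟩
end
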